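/- arXiv:1902.05513 — 5 statements merged into one kernel-verified Lean document; each statement's English description precedes it below -/
import Mathlib

section
/- For coprime positive integers m and n with 3m ≤ n, the five-case formula defining π_{m/n} gives a well-defined map from {1, …, n+2} to itself (every value of the formula lies in {1, …, n+2}), and this map is a bijection of {1, …, n+2}. -/
/-- The permutation `π_{m/n}` of `{1, …, n+2}`, defined by the five-case formula
from Definition 2.1 (given as a function on `ℤ`; the five cases of the formula
correspond to the branches of the `if`-chain on the domain `{1, …, n+2}`). -/
def piQ (m n : ℤ) (r : ℤ) : ℤ :=
  if r ≤ n - 3 * m + 1 then r + m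
  else if r ≤ n - 2 * m + 1 then r + m + 1
  else if r ≤ n - m + 1 then 2 * n - 2 * m + 4 - r
  else if r = n - m + 2 then n - 2 * m + 2
  else n + 3 - r

/-- For coprime positive integers `m`, `n` with `3m ≤ n`, every value of the formula
defining `π_{m/n}` on `{1, …, n+2}` lies in `{1, …, n+2}`, and the resulting map is a
bijection of `{1, …, n+2}`. -/
theorem piQ_wellDefined_and_bijective (m n : ℕ) (hm : 0 < m) (hn : 0 < n)
    (hmn : 3 * m ≤ n) (hcop : Nat.Coprime m n) :
    (∀ r ∈ Set.Icc (1 : ℤ) ((n : ℤ) + 2), piQ (m : ℤ) (n : ℤ) r ∈ Set.Icc (1 : ℤ) ((n : ℤ) + 2)) ∧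
    Set.BijOn (piQ (m : ℤ) (n : ℤ)) (Set.Icc (1 : ℤ) ((n : ℤ) + 2))
      (Set.Icc (1 : ℤ) ((n : ℤ) + 2)) := by
  have hmaps : Set.MapsTo (piQ (m : ℤ) (n : ℤ)) (Set.Icc (1 : ℤ) ((n : ℤ) + 2))
      (Set.Icc (1 : ℤ) ((n : ℤ) + 2)) := by
    intro r hr
    simp only [Set.mem_Icc] at hr ⊢
    unfold piQ
    split_ifs <;> omega
  have hinj : Set.InjOn (piQ (m : ℤ) (n : ℤ)) (Set.Icc (1 : ℤ) ((n : ℤ) + 2)) := by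
    intro a ha b hb hab
    simp only [Set.mem_Icc] at ha hb
    unfold piQ at hab
    split_ifs at hab <;> omega
  exact ⟨hmaps, ((Set.finite_Icc _ _).injOn_iff_bijOn_of_mapsTo hmaps).mp hinj⟩
end

section
/- For coprime positive integers m and n with 3m ≤ n, the permutation π_{m/n} of {1, …, n+2} is a cyclic permutation: as an element of the symmetric group on {1, …, n+2} it is a single cycle of length n+2, i.e., the cyclic subgroup it generates acts transitively on {1, …, n+2}. -/
/-- Explicit inverse of `piQ` on the domain. -/
def piQInv (m n : ℤ) (r : ℤ) : ℤ :=
  if r ≤ m then n + 3 - r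
  else if r ≤ n - 2 * m + 1 then r - m
  else if r = n - 2 * m + 2 then n - m + 2
  else if r ≤ n - m + 2 then r - m - 1
  else 2 * n - 2 * m + 4 - r

/-- Semiconjugacy to rotation by `m` on `ℤ/n` (integer representative). -/
def muQ (m n : ℤ) (x : ℤ) : ℤ :=
  if x ≤ n - 2 * m + 1 then x - 1
  else if x = n - 2 * m + 2 then 0
  else if x ≤ n - m + 2 then x - 2
  else if x ≤ n + 1 then 2 * n - m + 2 - x
  else m

section IntLemmas

variable {m n : ℤ}

lemma piQ_mapsTo (hm : 1 ≤ m) (hmn : 3 * m ≤ n) :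
    Set.MapsTo (piQ m n) (Set.Icc 1 (n + 2)) (Set.Icc 1 (n + 2)) := by
  intro r hr
  simp only [Set.mem_Icc] at hr ⊢
  simp only [piQ]
  split_ifs <;> omega

lemma piQInv_mapsTo (hm : 1 ≤ m) (hmn : 3 * m ≤ n) :
    Set.MapsTo (piQInv m n) (Set.Icc 1 (n + 2)) (Set.Icc 1 (n + 2)) := by
  intro r hr
  simp only [Set.mem_Icc] at hr ⊢
  simp only [piQInv]
  split_ifs <;> omega

lemma piQ_leftInv (hm : 1 ≤ m) (hmn : 3 * m ≤ n) :
    ∀ r ∈ Set.Icc (1 : ℤ) (n + 2), piQInv m n (piQ m n r) = r := by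
  intro r hr
  simp only [Set.mem_Icc] at hr
  simp only [piQ, piQInv]
  split_ifs <;> omega

lemma piQ_rightInv (hm : 1 ≤ m) (hmn : 3 * m ≤ n) :
    ∀ r ∈ Set.Icc (1 : ℤ) (n + 2), piQ m n (piQInv m n r) = r := by
  intro r hr
  simp only [Set.mem_Icc] at hr
  simp only [piQ, piQInv]
  split_ifs <;> omega

lemma piQ_bijOn (hm : 1 ≤ m) (hmn : 3 * m ≤ n) :
    Set.BijOn (piQ m n) (Set.Icc 1 (n + 2)) (Set.Icc 1 (n + 2)) :=
  Set.InvOn.bijOn ⟨piQ_leftInv hm hmn, piQ_rightInv hm hmn⟩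
    (piQ_mapsTo hm hmn) (piQInv_mapsTo hm hmn)

lemma muQ_step (hm : 1 ≤ m) (hmn : 3 * m ≤ n) :
    ∀ r ∈ Set.Icc (1 : ℤ) (n + 1),
      muQ m n (piQ m n r) = muQ m n r + m ∨
      muQ m n (piQ m n r) = muQ m n r + m - n := by
  intro r hr
  simp only [Set.mem_Icc] at hr
  simp only [piQ, muQ]
  split_ifs <;> omega

lemma piQ_top (hm : 1 ≤ m) (hmn : 3 * m ≤ n) : piQ m n (n + 2) = 1 := by
  simp only [piQ]; split_ifs <;> omega

lemma piQ_one (hm : 1 ≤ m) (hmn : 3 * m ≤ n) : piQ m n 1 = 1 + m := by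
  simp only [piQ]; split_ifs <;> omega

lemma piQ_iter_mapsTo (hm : 1 ≤ m) (hmn : 3 * m ≤ n) (k : ℕ) :
    Set.MapsTo ((piQ m n)^[k]) (Set.Icc 1 (n + 2)) (Set.Icc 1 (n + 2)) :=
  (piQ_mapsTo hm hmn).iterate k

lemma piQ_iter_injOn (hm : 1 ≤ m) (hmn : 3 * m ≤ n) (k : ℕ) :
    Set.InjOn ((piQ m n)^[k]) (Set.Icc 1 (n + 2)) := by
  induction k with
  | zero => exact Set.injOn_id _
  | succ k ih =>
    rw [Function.iterate_succ]
    exact ih.comp (piQ_bijOn hm hmn).injOn (piQ_mapsTo hm hmn)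

lemma exists_period (hm : 1 ≤ m) (hmn : 3 * m ≤ n) {r : ℤ}
    (hr : r ∈ Set.Icc (1 : ℤ) (n + 2)) :
    ∃ p : ℕ, 1 ≤ p ∧ (piQ m n)^[p] r = r := by
  have hcard : (Finset.Icc (1 : ℤ) (n + 2)).card < (Finset.range ((n + 2).toNat + 1)).card := by
    rw [Finset.card_range, Int.card_Icc]
    omega
  obtain ⟨i, hi, j, hj, hne, heq⟩ :=
    Finset.exists_ne_map_eq_of_card_lt_of_maps_to hcard
      (f := fun k => (piQ m n)^[k] r)
      (fun k _ => by
        have := piQ_iter_mapsTo hm hmn k hr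
        simpa [Finset.mem_Icc, Set.mem_Icc] using this)
  have key : ∀ i j : ℕ, i < j → (piQ m n)^[i] r = (piQ m n)^[j] r →
      ∃ p : ℕ, 1 ≤ p ∧ (piQ m n)^[p] r = r := by
    intro i j hij he
    refine ⟨j - i, by omega, ?_⟩
    have hj' : j = i + (j - i) := by omega
    rw [hj', Function.iterate_add_apply] at he
    exact piQ_iter_injOn hm hmn i (piQ_iter_mapsTo hm hmn (j - i) hr) hr he.symm
  rcases hne.lt_or_gt with h | h
  · exact key i j h heq
  · exact key j i h heq.symm

end IntLemmas

section Reach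

lemma reach_top (m n : ℕ) (hm : 0 < m) (hn : 0 < n)
    (hmn : 3 * m ≤ n) (hcop : Nat.Coprime m n) :
    ∀ r ∈ Set.Icc (1 : ℤ) ((n : ℤ) + 2), ∃ k : ℕ,
      (piQ (m : ℤ) (n : ℤ))^[k] r = (n : ℤ) + 2 := by
  intro r hr
  haveI : NeZero n := ⟨hn.ne'⟩
  have hm' : (1 : ℤ) ≤ (m : ℤ) := by exact_mod_cast hm
  have hmn' : 3 * (m : ℤ) ≤ (n : ℤ) := by exact_mod_cast hmn
  by_contra hcon
  push_neg at hcon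
  -- the forward orbit
  have hKS : ∀ k : ℕ, (piQ (m : ℤ) (n : ℤ))^[k] r ∈ Set.Icc (1 : ℤ) ((n : ℤ) + 2) :=
    fun k => piQ_iter_mapsTo hm' hmn' k hr
  have hKfin : {x : ℤ | ∃ k : ℕ, (piQ (m : ℤ) (n : ℤ))^[k] r = x}.Finite :=
    (Set.finite_Icc _ _).subset (by rintro x ⟨k, rfl⟩; exact hKS k)
  have htopK : ∀ k : ℕ, (piQ (m : ℤ) (n : ℤ))^[k] r ≠ (n : ℤ) + 2 := hcon
  -- backward invariance of the orbit
  obtain ⟨p, hp1, hpr⟩ := exists_period hm' hmn' hr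
  have hKback : ∀ k : ℕ, ∃ j : ℕ,
      piQ (m : ℤ) (n : ℤ) ((piQ (m : ℤ) (n : ℤ))^[j] r) = (piQ (m : ℤ) (n : ℤ))^[k] r := by
    intro k
    cases k with
    | zero =>
      refine ⟨p - 1, ?_⟩
      have h := Function.iterate_succ_apply' (piQ (m : ℤ) (n : ℤ)) (p - 1) r
      have h2 : (p - 1).succ = p := by omega
      rw [h2, hpr] at h
      simp only [Function.iterate_zero_apply]
      exact h.symm
    | succ k => exact ⟨k, (Function.iterate_succ_apply' _ k r).symm⟩
  have h1K : ∀ k : ℕ, (piQ (m : ℤ) (n : ℤ))^[k] r ≠ 1 := by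
    intro k hk
    obtain ⟨j, hj⟩ := hKback k
    rw [hk] at hj
    have htopS : ((n : ℤ) + 2) ∈ Set.Icc (1 : ℤ) ((n : ℤ) + 2) := by
      simp only [Set.mem_Icc]; omega
    have : (piQ (m : ℤ) (n : ℤ))^[j] r = (n : ℤ) + 2 :=
      (piQ_bijOn hm' hmn').injOn (hKS j) htopS (by rw [hj, piQ_top hm' hmn'])
    exact htopK j this
  have h1mK : ∀ k : ℕ, (piQ (m : ℤ) (n : ℤ))^[k] r ≠ 1 + (m : ℤ) := by
    intro k hk
    obtain ⟨j, hj⟩ := hKback k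
    rw [hk] at hj
    have h1S : (1 : ℤ) ∈ Set.Icc (1 : ℤ) ((n : ℤ) + 2) := by
      simp only [Set.mem_Icc]; omega
    have : (piQ (m : ℤ) (n : ℤ))^[j] r = 1 :=
      (piQ_bijOn hm' hmn').injOn (hKS j) h1S (by rw [hj, piQ_one hm' hmn'])
    exact h1K j this
  -- semiconjugacy to rotation by m on ZMod n
  have hstep : ∀ x ∈ Set.Icc (1 : ℤ) ((n : ℤ) + 1),
      ((muQ (m : ℤ) (n : ℤ) (piQ (m : ℤ) (n : ℤ) x) : ℤ) : ZMod n)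
        = ((muQ (m : ℤ) (n : ℤ) x : ℤ) : ZMod n) + (m : ZMod n) := by
    intro x hx
    rcases muQ_step hm' hmn' x hx with h | h
    · rw [h]; push_cast; ring
    · rw [h]; push_cast; simp [ZMod.natCast_self]
  have hiter : ∀ k : ℕ,
      ((muQ (m : ℤ) (n : ℤ) ((piQ (m : ℤ) (n : ℤ))^[k] r) : ℤ) : ZMod n)
        = ((muQ (m : ℤ) (n : ℤ) r : ℤ) : ZMod n) + (k : ZMod n) * (m : ZMod n) := by
    intro k
    induction k with
    | zero => simp
    | succ k ih =>
      have hxS := hKS k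
      have hxne := htopK k
      have hx1 : (piQ (m : ℤ) (n : ℤ))^[k] r ∈ Set.Icc (1 : ℤ) ((n : ℤ) + 1) := by
        simp only [Set.mem_Icc] at hxS ⊢; omega
      rw [Function.iterate_succ_apply', hstep _ hx1, ih]
      push_cast
      ring
  -- the value map on the orbit is surjective onto ZMod n
  have hsurj : ∀ c : ZMod n, ∃ k : ℕ,
      ((muQ (m : ℤ) (n : ℤ) ((piQ (m : ℤ) (n : ℤ))^[k] r) : ℤ) : ZMod n) = c := by
    intro c
    obtain ⟨k, hk⟩ := ZMod.natCast_zmod_surjective (n := n)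
      ((c - ((muQ (m : ℤ) (n : ℤ) r : ℤ) : ZMod n))
        * (((ZMod.unitOfCoprime m hcop)⁻¹ : (ZMod n)ˣ) : ZMod n))
    refine ⟨k, ?_⟩
    rw [hiter k, hk]
    have hum : ((ZMod.unitOfCoprime m hcop : (ZMod n)ˣ) : ZMod n) = (m : ZMod n) :=
      ZMod.coe_unitOfCoprime m hcop
    calc ((muQ (m : ℤ) (n : ℤ) r : ℤ) : ZMod n)
          + (c - ((muQ (m : ℤ) (n : ℤ) r : ℤ) : ZMod n))
            * (((ZMod.unitOfCoprime m hcop)⁻¹ : (ZMod n)ˣ) : ZMod n) * (m : ZMod n)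
        = ((muQ (m : ℤ) (n : ℤ) r : ℤ) : ZMod n)
          + (c - ((muQ (m : ℤ) (n : ℤ) r : ℤ) : ZMod n))
            * ((((ZMod.unitOfCoprime m hcop)⁻¹ : (ZMod n)ˣ) : ZMod n)
              * ((ZMod.unitOfCoprime m hcop : (ZMod n)ˣ) : ZMod n)) := by
          rw [hum]; ring
      _ = c := by rw [(ZMod.unitOfCoprime m hcop).inv_mul]; ring
  -- counting
  have hinj : Set.InjOn
      (fun c : ZMod n => (piQ (m : ℤ) (n : ℤ))^[Classical.choose (hsurj c)] r)
      Set.univ := by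
    intro c1 _ c2 _ h
    have h1 := Classical.choose_spec (hsurj c1)
    have h2 := Classical.choose_spec (hsurj c2)
    simp only at h
    rw [← h1, ← h2, h]
  have hcard1 : (Set.univ : Set (ZMod n)).ncard
      ≤ {x : ℤ | ∃ k : ℕ, (piQ (m : ℤ) (n : ℤ))^[k] r = x}.ncard :=
    Set.ncard_le_ncard_of_injOn _ (fun c _ => ⟨_, rfl⟩) hinj hKfin
  have huniv : (Set.univ : Set (ZMod n)).ncard = n := by
    rw [Set.ncard_univ, Nat.card_zmod]
  have hsub3 : insert (1 : ℤ) (insert (1 + (m : ℤ)) (insert ((n : ℤ) + 2)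
      {x : ℤ | ∃ k : ℕ, (piQ (m : ℤ) (n : ℤ))^[k] r = x}))
      ⊆ Set.Icc (1 : ℤ) ((n : ℤ) + 2) := by
    intro x hx
    simp only [Set.mem_insert_iff] at hx
    rcases hx with rfl | rfl | rfl | hx
    · simp only [Set.mem_Icc]; omega
    · simp only [Set.mem_Icc]; omega
    · simp only [Set.mem_Icc]; omega
    · obtain ⟨k, rfl⟩ := hx; exact hKS k
  have hcard3 : (insert (1 : ℤ) (insert (1 + (m : ℤ)) (insert ((n : ℤ) + 2)
      {x : ℤ | ∃ k : ℕ, (piQ (m : ℤ) (n : ℤ))^[k] r = x}))).ncard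
      = {x : ℤ | ∃ k : ℕ, (piQ (m : ℤ) (n : ℤ))^[k] r = x}.ncard + 3 := by
    rw [Set.ncard_insert_of_notMem (by
        simp only [Set.mem_insert_iff, Set.mem_setOf_eq]
        push_neg
        refine ⟨by omega, by omega, ?_⟩
        intro k hk
        exact h1K k hk) ((hKfin.insert _).insert _),
      Set.ncard_insert_of_notMem (by
        simp only [Set.mem_insert_iff, Set.mem_setOf_eq]
        push_neg
        refine ⟨by omega, ?_⟩
        intro k hk
        exact h1mK k hk) (hKfin.insert _),
      Set.ncard_insert_of_notMem (by
        simp only [Set.mem_setOf_eq]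
        intro ⟨k, hk⟩
        exact htopK k hk) hKfin]
  have hIcc : (Set.Icc (1 : ℤ) ((n : ℤ) + 2)).ncard = n + 2 := by
    rw [← Finset.coe_Icc, Set.ncard_coe_finset, Int.card_Icc]
    omega
  have hle : {x : ℤ | ∃ k : ℕ, (piQ (m : ℤ) (n : ℤ))^[k] r = x}.ncard + 3 ≤ n + 2 := by
    rw [← hcard3, ← hIcc]
    exact Set.ncard_le_ncard hsub3 (Set.finite_Icc _ _)
  omega

end Reach

/-- For coprime positive integers `m`, `n` with `3m ≤ n`, the permutation `π_{m/n}` of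
`{1, …, n+2}` is a cyclic permutation: it is a bijection of `{1, …, n+2}` whose cyclic
group of iterates acts transitively on `{1, …, n+2}` (i.e. it is a single cycle of
length `n+2`). -/
theorem piQ_isCyclic (m n : ℕ) (hm : 0 < m) (hn : 0 < n)
    (hmn : 3 * m ≤ n) (hcop : Nat.Coprime m n) :
    Set.BijOn (piQ (m : ℤ) (n : ℤ)) (Set.Icc (1 : ℤ) ((n : ℤ) + 2))
      (Set.Icc (1 : ℤ) ((n : ℤ) + 2)) ∧
    ∀ r ∈ Set.Icc (1 : ℤ) ((n : ℤ) + 2), ∀ s ∈ Set.Icc (1 : ℤ) ((n : ℤ) + 2),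
      ∃ k : ℕ, (piQ (m : ℤ) (n : ℤ))^[k] r = s := by
  have hm' : (1 : ℤ) ≤ (m : ℤ) := by exact_mod_cast hm
  have hmn' : 3 * (m : ℤ) ≤ (n : ℤ) := by exact_mod_cast hmn
  refine ⟨piQ_bijOn hm' hmn', ?_⟩
  intro r hr s hs
  obtain ⟨k1, hk1⟩ := reach_top m n hm hn hmn hcop r hr
  obtain ⟨k2, hk2⟩ := reach_top m n hm hn hmn hcop s hs
  obtain ⟨p, hp1, hps⟩ := exists_period hm' hmn' hs
  -- s is periodic with period p; iterating p k2 times returns to s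
  have hmul : ∀ t : ℕ, (piQ (m : ℤ) (n : ℤ))^[p * t] s = s := by
    intro t
    induction t with
    | zero => simp
    | succ t ih =>
      have : p * (t + 1) = p * t + p := by ring
      rw [this, Function.iterate_add_apply, hps, ih]
  refine ⟨(p * k2 - k2) + k1, ?_⟩
  rw [Function.iterate_add_apply, hk1, ← hk2, ← Function.iterate_add_apply]
  have : p * k2 - k2 + k2 = p * k2 := by
    have : k2 ≤ p * k2 := Nat.le_mul_of_pos_left k2 hp1
    omega
  rw [this, hmul k2]
end

section
/- The map F sends Σ into Σ, and F respects the identification ∼: whenever p ∼ p′ for p, p′ ∈ Σ, one has F(p) ∼ F(p′). Consequently there is a unique map φ₀ : S → S satisfying φ₀ ∘ π = π ∘ F. -/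
noncomputable section

/-- The unit square `Σ = [0,1] × [0,1] ⊆ ℝ²`. -/
def Sq : Set (ℝ × ℝ) := Set.Icc (0 : ℝ) 1 ×ˢ Set.Icc (0 : ℝ) 1

/-- The (discontinuous, non-injective) horseshoe-like map
`F(x,y) = (2x, y/2)` for `x ≤ 1/2` and `F(x,y) = (2−2x, 1−y/2)` for `x > 1/2`. -/
def F : ℝ × ℝ → ℝ × ℝ :=
  fun p => if p.1 ≤ 1 / 2 then (2 * p.1, p.2 / 2) else (2 - 2 * p.1, 1 - p.2 / 2)

/-- The set `E` of fold-segment endpoints together with the bottom-left corner: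
`E = {(0,0), (1,1)} ∪ {(0, 2^{−i}) : i ≥ 0} ∪ {(2^{−i}, 0) : i ≥ 0}`. -/
def Efold : Set (ℝ × ℝ) :=
  {((0 : ℝ), (0 : ℝ)), ((1 : ℝ), (1 : ℝ))} ∪
    {q | ∃ i : ℕ, q = ((0 : ℝ), (2 : ℝ) ^ (-(i : ℤ)))} ∪
    {q | ∃ i : ℕ, q = ((2 : ℝ) ^ (-(i : ℤ)), (0 : ℝ))}

/-- The generating relation for the identifications on `Σ`:
`(x,1) ∼ (1−x,1)` for `x ∈ [0,1]`; `(1,y) ∼ (1,1−y)` for `y ∈ [0,1]`;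
`(0,y) ∼ (0, 3·2^{−i} − y)` for `i ≥ 1`, `y ∈ [2^{−i}, 2^{−i+1}]`;
`(x,0) ∼ (3·2^{−i} − x, 0)` for `i ≥ 1`, `x ∈ [2^{−i}, 2^{−i+1}]`;
and `p ∼ p′` for all `p, p′ ∈ E`. -/
def baseRel (p p' : ℝ × ℝ) : Prop :=
  (∃ x ∈ Set.Icc (0 : ℝ) 1, p = (x, (1 : ℝ)) ∧ p' = (1 - x, (1 : ℝ))) ∨
  (∃ y ∈ Set.Icc (0 : ℝ) 1, p = ((1 : ℝ), y) ∧ p' = ((1 : ℝ), 1 - y)) ∨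
  (∃ i : ℕ, 1 ≤ i ∧ ∃ y ∈ Set.Icc ((2 : ℝ) ^ (-(i : ℤ))) ((2 : ℝ) ^ (-(i : ℤ) + 1)),
      p = ((0 : ℝ), y) ∧ p' = ((0 : ℝ), 3 * (2 : ℝ) ^ (-(i : ℤ)) - y)) ∨
  (∃ i : ℕ, 1 ≤ i ∧ ∃ x ∈ Set.Icc ((2 : ℝ) ^ (-(i : ℤ))) ((2 : ℝ) ^ (-(i : ℤ) + 1)),
      p = (x, (0 : ℝ)) ∧ p' = (3 * (2 : ℝ) ^ (-(i : ℤ)) - x, (0 : ℝ))) ∨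
  (p ∈ Efold ∧ p' ∈ Efold)

/-- The smallest equivalence relation containing `baseRel` (all points related by
`baseRel` lie in `Σ`, so its restriction to `Σ` is the smallest equivalence relation
on `Σ` containing the given identifications). -/
def hsRel : ℝ × ℝ → ℝ × ℝ → Prop := Relation.EqvGen baseRel

/-- The setoid on `Σ` given by restricting `hsRel`. -/
def hsSetoid : Setoid ↥Sq :=
  ⟨fun p q => hsRel p.val q.val,
   ⟨fun _ => Relation.EqvGen.refl _, fun h => Relation.EqvGen.symm _ _ h, fun h h' => Relation.EqvGen.trans _ _ _ h h'⟩⟩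

/-- The quotient sphere `S = Σ/∼`, with the quotient topology. -/
abbrev HS : Type := Quotient hsSetoid

/-- The quotient map `π : Σ → S`. -/
def hsPi (p : ↥Sq) : HS := Quotient.mk hsSetoid p

end


lemma F_left {p : ℝ × ℝ} (h : p.1 ≤ 1 / 2) : F p = (2 * p.1, p.2 / 2) := if_pos h
lemma F_right {p : ℝ × ℝ} (h : ¬ p.1 ≤ 1 / 2) : F p = (2 - 2 * p.1, 1 - p.2 / 2) := if_neg h

lemma zsucc (j : ℕ) : (2:ℝ) ^ (-((j+1 : ℕ):ℤ)) = (2:ℝ)^(-(j:ℤ)) / 2 := by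
  push_cast; rw [neg_add, zpow_add₀ (two_ne_zero), zpow_neg_one]; ring
lemma zsucc' (j : ℕ) : (2:ℝ) ^ (-((j+1 : ℕ):ℤ)+1) = (2:ℝ)^(-(j:ℤ)) := by
  congr 1; push_cast; ring
lemma zadd1 (j : ℕ) : (2:ℝ) ^ (-(j:ℤ)+1) = 2 * (2:ℝ)^(-(j:ℤ)) := by
  rw [zpow_add₀ (two_ne_zero : (2:ℝ) ≠ 0), zpow_one]; ring
lemma zpos (j : ℤ) : (0:ℝ) < 2 ^ j := zpow_pos (by norm_num) j
lemma zle_half {k : ℕ} (h : 1 ≤ k) : (2:ℝ)^(-(k:ℤ)) ≤ 1/2 := by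
  have : (2:ℝ)^(-(k:ℤ)) ≤ 2^(-1:ℤ) := zpow_le_zpow_right₀ one_le_two (by omega)
  simpa using this

lemma mem00 : ((0:ℝ),(0:ℝ)) ∈ Efold := Or.inl (Or.inl (Or.inl rfl))
lemma mem11 : ((1:ℝ),(1:ℝ)) ∈ Efold := Or.inl (Or.inl (Or.inr rfl))
lemma memL (i : ℕ) : ((0:ℝ), (2:ℝ)^(-(i:ℤ))) ∈ Efold := Or.inl (Or.inr ⟨i, rfl⟩)
lemma memB (i : ℕ) : ((2:ℝ)^(-(i:ℤ)), (0:ℝ)) ∈ Efold := Or.inr ⟨i, rfl⟩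
lemma mem01 : ((0:ℝ),(1:ℝ)) ∈ Efold := by
  have := memL 0; norm_num at this ⊢; tauto
lemma mem10 : ((1:ℝ),(0:ℝ)) ∈ Efold := by
  have := memB 0; norm_num at this ⊢; tauto

lemma F_Efold {p : ℝ × ℝ} (hp : p ∈ Efold) : F p ∈ Efold := by
  rcases hp with ((rfl | rfl) | ⟨i, rfl⟩) | ⟨i, rfl⟩
  · rw [F_left (by norm_num)]; norm_num; exact mem00
  · rw [F_right (by norm_num)]
    have : ((2:ℝ) - 2 * 1, (1:ℝ) - 1 / 2) = ((0:ℝ), (2:ℝ)^(-((1:ℕ):ℤ))) := by norm_num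
    rw [this]; exact memL 1
  · rw [F_left (by norm_num)]
    have : ((2:ℝ) * 0, (2:ℝ)^(-(i:ℤ)) / 2) = ((0:ℝ), (2:ℝ)^(-((i+1:ℕ):ℤ))) := by
      rw [zsucc]; norm_num
    rw [this]; exact memL (i+1)
  · rcases i with _ | j
    · have h0 : (2:ℝ)^(-((0:ℕ):ℤ)) = 1 := by norm_num
      rw [h0, F_right (by norm_num)]
      have : ((2:ℝ) - 2 * 1, (1:ℝ) - 0 / 2) = ((0:ℝ), (1:ℝ)) := by norm_num
      rw [this]; exact mem01
    · have hh : (2:ℝ)^(-((j+1:ℕ):ℤ)) ≤ 1/2 := zle_half (by omega)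
      rw [F_left hh]
      have : ((2:ℝ) * (2:ℝ)^(-((j+1:ℕ):ℤ)), (0:ℝ)/2) = ((2:ℝ)^(-(j:ℤ)), (0:ℝ)) := by
        rw [zsucc]; norm_num; ring
      rw [this]; exact memB j

lemma F_base {p p' : ℝ × ℝ} (h : baseRel p p') : hsRel (F p) (F p') := by
  rcases h with ⟨x, hx, rfl, rfl⟩ | ⟨y, hy, rfl, rfl⟩ | ⟨i, hi, y, hy, rfl, rfl⟩ |
    ⟨i, hi, x, hx, rfl, rfl⟩ | ⟨h1, h2⟩
  · -- top edge fold: F p = F p'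
    obtain ⟨hx0, hx1⟩ := hx
    have : F (x, (1:ℝ)) = F (1 - x, (1:ℝ)) := by
      unfold F; dsimp only
      split_ifs with h1 h2 h2 <;> rw [Prod.mk.injEq] <;> constructor <;> linarith
    rw [this]; exact Relation.EqvGen.refl _
  · -- right edge fold
    obtain ⟨hy0, hy1⟩ := hy
    rw [F_right (by norm_num), F_right (by norm_num)]
    apply Relation.EqvGen.rel
    refine Or.inr (Or.inr (Or.inl ⟨1, le_refl 1, 1 - y/2, ⟨?_, ?_⟩, ?_, ?_⟩))
    · have : (2:ℝ)^(-((1:ℕ):ℤ)) = 1/2 := by norm_num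
      rw [this]; linarith
    · have : (2:ℝ)^(-((1:ℕ):ℤ)+1) = 1 := by norm_num
      rw [this]; linarith
    · rw [Prod.mk.injEq]; norm_num
    · rw [Prod.mk.injEq]; norm_num; ring
  · -- left edge folds
    obtain ⟨hy0, hy1⟩ := hy
    rw [F_left (by norm_num), F_left (by norm_num)]
    apply Relation.EqvGen.rel
    refine Or.inr (Or.inr (Or.inl ⟨i+1, by omega, y/2, ⟨?_, ?_⟩, ?_, ?_⟩))
    · rw [zsucc]; linarith
    · rw [zsucc']; rw [zadd1] at hy1; linarith
    · rw [Prod.mk.injEq]; norm_num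
    · rw [Prod.mk.injEq, zsucc]; constructor
      · norm_num
      · ring
  · -- bottom edge folds
    obtain ⟨hx0, hx1⟩ := hx
    obtain ⟨j, rfl⟩ : ∃ j, i = j + 1 := ⟨i - 1, by omega⟩
    rcases Nat.eq_zero_or_pos j with rfl | hj
    · -- i = 1 : bottom-right segment maps to top edge
      have e1 : (2:ℝ)^(-((0+1:ℕ):ℤ)) = 1/2 := by norm_num
      have e2 : (2:ℝ)^(-((0+1:ℕ):ℤ)+1) = 1 := by norm_num
      rw [e2] at hx1
      rw [e1] at hx0 ⊢
      by_cases hxh : x ≤ 1/2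
      · -- x = 1/2
        have hx2 : x = 1/2 := le_antisymm hxh hx0
        subst hx2
        rw [F_left (by norm_num), F_right (by norm_num)]
        apply Relation.EqvGen.rel
        refine Or.inr (Or.inr (Or.inr (Or.inr ⟨?_, ?_⟩)))
        · have : ((2:ℝ) * (1/2), (0:ℝ)/2) = ((1:ℝ), (0:ℝ)) := by norm_num
          rw [this]; exact mem10
        · have : ((2:ℝ) - 2 * (3 * (1/2) - 1/2), 1 - (0:ℝ)/2) = ((0:ℝ), (1:ℝ)) := by norm_num
          rw [this]; exact mem01
      · by_cases hxh' : 3 * (1/2 : ℝ) - x ≤ 1/2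
        · -- x = 1
          have hx2 : x = 1 := le_antisymm hx1 (by linarith)
          subst hx2
          rw [F_right (by norm_num), F_left (by norm_num)]
          apply Relation.EqvGen.rel
          refine Or.inr (Or.inr (Or.inr (Or.inr ⟨?_, ?_⟩)))
          · have : ((2:ℝ) - 2 * 1, 1 - (0:ℝ)/2) = ((0:ℝ), (1:ℝ)) := by norm_num
            rw [this]; exact mem01
          · have : ((2:ℝ) * (3 * (1/2) - 1), (0:ℝ)/2) = ((1:ℝ), (0:ℝ)) := by norm_num
            rw [this]; exact mem10
        · rw [F_right hxh, F_right hxh']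
          apply Relation.EqvGen.rel
          refine Or.inl ⟨2 - 2*x, ⟨by linarith, by linarith⟩, ?_, ?_⟩
          · rw [Prod.mk.injEq]; norm_num
          · rw [Prod.mk.injEq]; constructor
            · ring
            · norm_num
    · -- i ≥ 2 : stays on the bottom edge
      have A : (2:ℝ)^(-((j+1:ℕ):ℤ)) = (2:ℝ)^(-(j:ℤ))/2 := zsucc j
      have B : (2:ℝ)^(-((j+1:ℕ):ℤ)+1) = (2:ℝ)^(-(j:ℤ)) := zsucc' j
      have hhalf : (2:ℝ)^(-(j:ℤ)) ≤ 1/2 := zle_half hj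
      rw [A] at hx0 ⊢
      rw [B] at hx1
      rw [F_left (by dsimp only; linarith), F_left (by dsimp only; linarith)]
      apply Relation.EqvGen.rel
      refine Or.inr (Or.inr (Or.inr (Or.inl ⟨j, hj, 2*x, ⟨by linarith, ?_⟩, ?_, ?_⟩)))
      · rw [zadd1]; linarith
      · rw [Prod.mk.injEq]; norm_num
      · rw [Prod.mk.injEq]; constructor
        · ring
        · norm_num
  · exact Relation.EqvGen.rel _ _ (Or.inr (Or.inr (Or.inr (Or.inr ⟨F_Efold h1, F_Efold h2⟩))))

lemma F_resp {p p' : ℝ × ℝ} (h : hsRel p p') : hsRel (F p) (F p') := by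
  induction h with
  | rel a b hab => exact F_base hab
  | refl a => exact Relation.EqvGen.refl _
  | symm a b _ ih => exact Relation.EqvGen.symm _ _ ih
  | trans a b c _ _ ih1 ih2 => exact Relation.EqvGen.trans _ _ _ ih1 ih2

lemma F_mem : ∀ p ∈ Sq, F p ∈ Sq := by
  intro p hp
  simp only [Sq, Set.mem_prod, Set.mem_Icc] at hp ⊢
  obtain ⟨⟨hx0, hx1⟩, hy0, hy1⟩ := hp
  unfold F; split_ifs with h <;> dsimp only <;>
    exact ⟨⟨by linarith, by linarith⟩, by linarith, by linarith⟩


/-- `F` sends `Σ` into `Σ`, and `F` respects the identification `∼`: whenever `p ∼ p′`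
for `p, p′ ∈ Σ`, one has `F(p) ∼ F(p′)`. Consequently there is a unique map
`φ₀ : S → S` satisfying `φ₀ ∘ π = π ∘ F`. -/
theorem F_descends_to_quotient :
    (∀ p ∈ Sq, F p ∈ Sq) ∧
    (∀ p p' : ℝ × ℝ, p ∈ Sq → p' ∈ Sq → hsRel p p' → hsRel (F p) (F p')) ∧
    (∃! φ : HS → HS, ∀ (p : ℝ × ℝ) (hp : p ∈ Sq) (hFp : F p ∈ Sq),
        φ (hsPi ⟨p, hp⟩) = hsPi ⟨F p, hFp⟩) := by
  refine ⟨F_mem, fun p p' _ _ h => F_resp h, ?_, ?_, ?_⟩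
  · exact Quotient.lift (fun q : ↥Sq => hsPi ⟨F q.1, F_mem q.1 q.2⟩)
      (fun a b hab => Quotient.sound (F_resp hab))
  · intro p hp hFp; rfl
  · intro ψ hψ
    funext q
    induction q using Quotient.ind with
    | _ a =>
      obtain ⟨p, hp⟩ := a
      exact hψ p hp (F_mem p hp)
end

section
/- The induced map φ₀ : S → S, defined on equivalence classes by φ₀([p]) = [F(p)], is a bijection of S. Equivalently: for all p, p′ ∈ Σ, F(p) ∼ F(p′) if and only if p ∼ p′ (the identifications are precisely those needed to make F injective), and every point of Σ is ∼-equivalent to a point of F(Σ). -/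
noncomputable section

namespace HSaux

/-- Explicit section of `F`. -/
def G : ℝ × ℝ → ℝ × ℝ :=
  fun p => if p.2 ≤ 1 / 2 then (p.1 / 2, 2 * p.2) else (1 - p.1 / 2, 2 - 2 * p.2)

lemma tpos (i : ℕ) : (0:ℝ) < (2:ℝ) ^ (-(i:ℤ)) := by positivity

lemma tstep (n : ℤ) : (2:ℝ) ^ (n + 1) = 2 * (2:ℝ) ^ n := by
  rw [zpow_add_one₀ (by norm_num : (2:ℝ) ≠ 0)]; ring

lemma tsucc (i : ℕ) : (2:ℝ) ^ (-((i+1:ℕ):ℤ)) = (2:ℝ) ^ (-(i:ℤ)) / 2 := by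
  have : (-(i:ℤ)) = (-((i+1:ℕ):ℤ)) + 1 := by push_cast; ring
  rw [this, tstep]; ring

lemma tle1 (i : ℕ) : (2:ℝ) ^ (-(i:ℤ)) ≤ 1 := by
  induction i with
  | zero => norm_num
  | succ n ih => rw [tsucc]; linarith

lemma tle1' {i : ℕ} (hi : 1 ≤ i) : (2:ℝ) ^ (-(i:ℤ) + 1) ≤ 1 := by
  obtain ⟨j, rfl⟩ := Nat.exists_eq_add_of_le hi
  have : (-(((1+j:ℕ)):ℤ) + 1) = -(j:ℤ) := by push_cast; ring
  rw [this]; exact tle1 j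

/- baseRel constructors -/
lemma hs1 {x : ℝ} (hx : x ∈ Set.Icc (0:ℝ) 1) : hsRel (x, (1:ℝ)) (1 - x, (1:ℝ)) :=
  Relation.EqvGen.rel _ _ (Or.inl ⟨x, hx, rfl, rfl⟩)

lemma hs2 {y : ℝ} (hy : y ∈ Set.Icc (0:ℝ) 1) : hsRel ((1:ℝ), y) ((1:ℝ), 1 - y) :=
  Relation.EqvGen.rel _ _ (Or.inr (Or.inl ⟨y, hy, rfl, rfl⟩))

lemma hs3 {i : ℕ} (hi : 1 ≤ i) {y : ℝ}
    (hy : y ∈ Set.Icc ((2:ℝ) ^ (-(i:ℤ))) ((2:ℝ) ^ (-(i:ℤ) + 1))) :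
    hsRel ((0:ℝ), y) ((0:ℝ), 3 * (2:ℝ) ^ (-(i:ℤ)) - y) :=
  Relation.EqvGen.rel _ _ (Or.inr (Or.inr (Or.inl ⟨i, hi, y, hy, rfl, rfl⟩)))

lemma hs4 {i : ℕ} (hi : 1 ≤ i) {x : ℝ}
    (hx : x ∈ Set.Icc ((2:ℝ) ^ (-(i:ℤ))) ((2:ℝ) ^ (-(i:ℤ) + 1))) :
    hsRel (x, (0:ℝ)) (3 * (2:ℝ) ^ (-(i:ℤ)) - x, (0:ℝ)) :=
  Relation.EqvGen.rel _ _ (Or.inr (Or.inr (Or.inr (Or.inl ⟨i, hi, x, hx, rfl, rfl⟩))))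

lemma hs5 {p q : ℝ × ℝ} (hp : p ∈ Efold) (hq : q ∈ Efold) : hsRel p q :=
  Relation.EqvGen.rel _ _ (Or.inr (Or.inr (Or.inr (Or.inr ⟨hp, hq⟩))))

/- Efold membership -/
lemma mem_E00 : ((0:ℝ), (0:ℝ)) ∈ Efold := by
  simp only [Efold, Set.mem_union, Set.mem_insert_iff, Set.mem_singleton_iff]; tauto

lemma mem_E11 : ((1:ℝ), (1:ℝ)) ∈ Efold := by
  simp only [Efold, Set.mem_union, Set.mem_insert_iff, Set.mem_singleton_iff]; tauto

lemma mem_Eleft (i : ℕ) : ((0:ℝ), (2:ℝ) ^ (-(i:ℤ))) ∈ Efold := by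
  simp only [Efold, Set.mem_union, Set.mem_setOf_eq]
  exact Or.inl (Or.inr ⟨i, rfl⟩)

lemma mem_Ebot (i : ℕ) : ((2:ℝ) ^ (-(i:ℤ)), (0:ℝ)) ∈ Efold := by
  simp only [Efold, Set.mem_union, Set.mem_setOf_eq]
  exact Or.inr ⟨i, rfl⟩

lemma mem_E01 : ((0:ℝ), (1:ℝ)) ∈ Efold := by
  have := mem_Eleft 0; norm_num at this; exact this

lemma mem_E10 : ((1:ℝ), (0:ℝ)) ∈ Efold := by
  have := mem_Ebot 0; norm_num at this; exact this

lemma mem_Ehalf : ((0:ℝ), (1/2:ℝ)) ∈ Efold := by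
  have := mem_Eleft 1; norm_num at this; exact this

lemma mem_Ehalf' : ((1/2:ℝ), (0:ℝ)) ∈ Efold := by
  have := mem_Ebot 1; norm_num at this; exact this

end HSaux
end

noncomputable section
namespace HSaux

lemma Fc1 {x : ℝ} (y : ℝ) (h : x ≤ 1/2) : F (x, y) = (2*x, y/2) := by
  unfold F; rw [if_pos (show ((x,y) : ℝ × ℝ).1 ≤ 1/2 from h)]
lemma Fc2 {x : ℝ} (y : ℝ) (h : ¬ x ≤ 1/2) : F (x, y) = (2-2*x, 1-y/2) := by
  unfold F; rw [if_neg (show ¬ ((x,y) : ℝ × ℝ).1 ≤ 1/2 from h)]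
lemma Gc1 (x : ℝ) {y : ℝ} (h : y ≤ 1/2) : G (x, y) = (x/2, 2*y) := by
  unfold G; rw [if_pos (show ((x,y) : ℝ × ℝ).2 ≤ 1/2 from h)]
lemma Gc2 (x : ℝ) {y : ℝ} (h : ¬ y ≤ 1/2) : G (x, y) = (1-x/2, 2-2*y) := by
  unfold G; rw [if_neg (show ¬ ((x,y) : ℝ × ℝ).2 ≤ 1/2 from h)]

lemma FE {p : ℝ × ℝ} (hp : p ∈ Efold) : F p ∈ Efold := by
  simp only [Efold, Set.mem_union, Set.mem_insert_iff, Set.mem_singleton_iff,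
    Set.mem_setOf_eq] at hp
  rcases hp with (h | h) | h
  · rcases h with h | h
    · subst h; rw [Fc1 _ (by norm_num)]
      rw [show ((2:ℝ)*0, (0:ℝ)/2) = ((0:ℝ),(0:ℝ)) by norm_num]; exact mem_E00
    · subst h; rw [Fc2 _ (by norm_num)]
      have : ((2:ℝ) - 2*1, 1 - 1/2) = ((0:ℝ), (1/2:ℝ)) := by norm_num
      rw [this]; exact mem_Ehalf
  · obtain ⟨i, rfl⟩ := h
    rw [Fc1 _ (by norm_num)]
    have : ((2:ℝ)*0, (2:ℝ)^(-(i:ℤ))/2) = ((0:ℝ), (2:ℝ)^(-((i+1:ℕ):ℤ))) := by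
      rw [tsucc]; norm_num
    rw [this]; exact mem_Eleft (i+1)
  · obtain ⟨i, rfl⟩ := h
    match i with
    | 0 =>
      rw [show ((2:ℝ)^(-(0:ℕ):ℤ), (0:ℝ)) = ((1:ℝ), (0:ℝ)) by norm_num,
        Fc2 _ (by norm_num)]
      rw [show ((2:ℝ) - 2*1, 1 - 0/2) = ((0:ℝ), (1:ℝ)) by norm_num]
      exact mem_E01
    | (j+1) =>
      have hle : (2:ℝ)^(-((j+1:ℕ):ℤ)) ≤ 1/2 := by
        rw [tsucc]; have := tle1 j; linarith
      rw [Fc1 _ hle]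
      have : ((2:ℝ) * (2:ℝ)^(-((j+1:ℕ):ℤ)), (0:ℝ)/2) = ((2:ℝ)^(-(j:ℤ)), (0:ℝ)) := by
        have h2 : (2:ℝ) * (2:ℝ)^(-((j+1:ℕ):ℤ)) = (2:ℝ)^(-(j:ℤ)) := by rw [tsucc]; ring
        rw [h2]; norm_num
      rw [this]; exact mem_Ebot j

lemma GE {p : ℝ × ℝ} (hp : p ∈ Efold) : G p ∈ Efold := by
  simp only [Efold, Set.mem_union, Set.mem_insert_iff, Set.mem_singleton_iff,
    Set.mem_setOf_eq] at hp
  rcases hp with (h | h) | h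
  · rcases h with h | h
    · subst h; rw [Gc1 _ (by norm_num)]
      rw [show ((0:ℝ)/2, (2:ℝ)*0) = ((0:ℝ),(0:ℝ)) by norm_num]; exact mem_E00
    · subst h; rw [Gc2 _ (by norm_num)]
      rw [show ((1:ℝ) - 1/2, 2 - 2*1) = ((1/2:ℝ), (0:ℝ)) by norm_num]
      exact mem_Ehalf'
  · obtain ⟨i, rfl⟩ := h
    match i with
    | 0 =>
      rw [show ((0:ℝ), (2:ℝ)^(-(0:ℕ):ℤ)) = ((0:ℝ), (1:ℝ)) by norm_num,
        Gc2 _ (by norm_num)]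
      rw [show ((1:ℝ) - 0/2, 2 - 2*1) = ((1:ℝ), (0:ℝ)) by norm_num]
      exact mem_E10
    | (j+1) =>
      have hle : (2:ℝ)^(-((j+1:ℕ):ℤ)) ≤ 1/2 := by
        rw [tsucc]; have := tle1 j; linarith
      rw [Gc1 _ hle]
      have : ((0:ℝ)/2, (2:ℝ) * (2:ℝ)^(-((j+1:ℕ):ℤ))) = ((0:ℝ), (2:ℝ)^(-(j:ℤ))) := by
        have h2 : (2:ℝ) * (2:ℝ)^(-((j+1:ℕ):ℤ)) = (2:ℝ)^(-(j:ℤ)) := by rw [tsucc]; ring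
        rw [h2]; norm_num
      rw [this]; exact mem_Eleft j
  · obtain ⟨i, rfl⟩ := h
    rw [Gc1 _ (by norm_num)]
    have : ((2:ℝ)^(-(i:ℤ))/2, (2:ℝ)*0) = ((2:ℝ)^(-((i+1:ℕ):ℤ)), (0:ℝ)) := by
      rw [tsucc]; norm_num
    rw [this]; exact mem_Ebot (i+1)

end HSaux
end
noncomputable section
namespace HSaux

lemma texp (i : ℕ) : (2:ℝ)^(-(i:ℤ)+1) = 2 * (2:ℝ)^(-(i:ℤ)) := tstep _

lemma tcs (i : ℕ) : (2:ℝ)^(-((i+1:ℕ):ℤ)+1) = (2:ℝ)^(-(i:ℤ)) := by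
  congr 1; push_cast; ring

lemma t1 : (2:ℝ)^(-((1:ℕ):ℤ)) = 1/2 := by norm_num

lemma hs_congr {a b c d a' b' c' d' : ℝ} (h1 : a = a') (h2 : b = b') (h3 : c = c')
    (h4 : d = d') (h : hsRel (a', b') (c', d')) : hsRel (a, b) (c, d) := by
  rw [h1, h2, h3, h4]; exact h

lemma eq_congr {a b c d : ℝ} (h1 : a = c) (h2 : b = d) : hsRel (a, b) (c, d) := by
  rw [h1, h2]; exact Relation.EqvGen.refl _

lemma FbaseRel {p q : ℝ × ℝ} (h : baseRel p q) : hsRel (F p) (F q) := by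
  rcases h with ⟨x, hx, rfl, rfl⟩ | ⟨y, hy, rfl, rfl⟩ |
    ⟨i, hi, y, hy, rfl, rfl⟩ | ⟨i, hi, x, hx, rfl, rfl⟩ | ⟨hp, hq⟩
  · -- top edge fold -> equality
    obtain ⟨hx0, hx1⟩ := hx
    rcases le_or_gt x (1/2) with h1 | h1
    · rcases le_or_gt (1-x) (1/2) with h2 | h2
      · rw [Fc1 _ h1, Fc1 _ h2]; exact eq_congr (by linarith) (by norm_num)
      · rw [Fc1 _ h1, Fc2 _ (not_le.mpr h2)]; exact eq_congr (by ring) (by norm_num)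
    · rw [Fc2 _ (not_le.mpr h1), Fc1 _ (by linarith)]
      exact eq_congr (by ring) (by norm_num)
  · -- right edge fold -> left edge fold at scale 1
    obtain ⟨hy0, hy1⟩ := hy
    rw [Fc2 _ (by norm_num), Fc2 _ (by norm_num)]
    refine hs_congr (a' := 0) (b' := 1 - y/2) (c' := 0)
      (d' := 3*(2:ℝ)^(-((1:ℕ):ℤ)) - (1 - y/2)) (by norm_num) rfl (by norm_num)
      (by rw [t1]; ring) ?_
    exact hs3 le_rfl ⟨by rw [t1]; linarith, by rw [texp, t1]; linarith⟩
  · -- left edge fold at scale i -> scale i+1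
    obtain ⟨hy0, hy1⟩ := hy
    rw [texp] at hy1
    rw [Fc1 _ (by norm_num), Fc1 _ (by norm_num)]
    refine hs_congr (a' := 0) (b' := y/2) (c' := 0)
      (d' := 3*(2:ℝ)^(-((i+1:ℕ):ℤ)) - y/2) (by norm_num) rfl (by norm_num)
      (by rw [tsucc]; ring) ?_
    exact hs3 (by omega) ⟨by rw [tsucc]; linarith, by rw [tcs]; linarith⟩
  · -- bottom edge fold at scale i
    obtain ⟨hx0, hx1⟩ := hx
    rw [texp] at hx1
    match i, hi with
    | 1, _ =>
      have e1 : (1:ℝ)/2 ≤ x := by rw [t1] at hx0; exact hx0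
      have e2 : x ≤ 1 := by rw [t1] at hx1; linarith
      rcases le_or_gt x (1/2) with h1 | h1
      · have hxe : x = 1/2 := le_antisymm h1 e1
        subst hxe
        rw [Fc1 _ h1, Fc2 _ (by rw [t1]; norm_num)]
        refine hs_congr (a' := 1) (b' := 0) (c' := 0) (d' := 1)
          (by norm_num) (by norm_num) (by rw [t1]; norm_num) (by norm_num) ?_
        exact hs5 mem_E10 mem_E01
      · rcases le_or_gt (3*(2:ℝ)^(-((1:ℕ):ℤ)) - x) (1/2) with h2 | h2
        · have hxe : x = 1 := by rw [t1] at h2; linarith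
          subst hxe
          rw [Fc2 _ (not_le.mpr h1), Fc1 _ h2]
          refine hs_congr (a' := 0) (b' := 1) (c' := 1) (d' := 0)
            (by norm_num) (by norm_num) (by rw [t1]; norm_num) (by norm_num) ?_
          exact hs5 mem_E01 mem_E10
        · rw [Fc2 _ (not_le.mpr h1), Fc2 _ (not_le.mpr h2)]
          refine hs_congr (a' := 2-2*x) (b' := 1) (c' := 1-(2-2*x)) (d' := 1)
            rfl (by norm_num) (by rw [t1]; ring) (by norm_num) ?_
          exact hs1 ⟨by linarith, by linarith⟩
    | (j+2), _ =>
      have hsm : (2:ℝ)^(-((j+2:ℕ):ℤ)) ≤ 1/4 := by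
        rw [tsucc, tsucc]; have := tle1 j; linarith
      have hq : 3*(2:ℝ)^(-((j+2:ℕ):ℤ)) - x ≤ 1/2 := by linarith
      have ed : (2:ℝ)^(-((j+1:ℕ):ℤ)) = 2 * (2:ℝ)^(-((j+2:ℕ):ℤ)) := by
        rw [tsucc (j+1)]; ring
      have ed2 : (2:ℝ)^(-((j+1:ℕ):ℤ)+1) = 4 * (2:ℝ)^(-((j+2:ℕ):ℤ)) := by
        rw [texp, ed]; ring
      rw [Fc1 _ (by linarith), Fc1 _ hq]
      refine hs_congr (a' := 2*x) (b' := 0) (c' := 3*(2:ℝ)^(-((j+1:ℕ):ℤ)) - 2*x)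
        (d' := 0) rfl (by norm_num) (by rw [ed]; ring) (by norm_num) ?_
      exact hs4 (by omega) ⟨by rw [ed]; linarith, by rw [ed2]; linarith⟩
  · exact hs5 (FE hp) (FE hq)

end HSaux
end
noncomputable section
namespace HSaux

lemma GbaseRel {p q : ℝ × ℝ} (h : baseRel p q) : hsRel (G p) (G q) := by
  rcases h with ⟨x, hx, rfl, rfl⟩ | ⟨y, hy, rfl, rfl⟩ |
    ⟨i, hi, y, hy, rfl, rfl⟩ | ⟨i, hi, x, hx, rfl, rfl⟩ | ⟨hp, hq⟩
  · -- top edge fold -> bottom edge fold at scale 1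
    obtain ⟨hx0, hx1⟩ := hx
    rw [Gc2 _ (by norm_num), Gc2 _ (by norm_num)]
    refine hs_congr (a' := 1 - x/2) (b' := 0) (c' := 3*(2:ℝ)^(-((1:ℕ):ℤ)) - (1 - x/2))
      (d' := 0) rfl (by norm_num) (by rw [t1]; ring) (by norm_num) ?_
    exact hs4 le_rfl ⟨by rw [t1]; linarith, by rw [texp, t1]; linarith⟩
  · -- right edge fold -> equality
    obtain ⟨hy0, hy1⟩ := hy
    rcases le_or_gt y (1/2) with h1 | h1
    · rcases le_or_gt (1-y) (1/2) with h2 | h2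
      · rw [Gc1 _ h1, Gc1 _ h2]; exact eq_congr (by norm_num) (by linarith)
      · rw [Gc1 _ h1, Gc2 _ (not_le.mpr h2)]; exact eq_congr (by norm_num) (by ring)
    · rw [Gc2 _ (not_le.mpr h1), Gc1 _ (by linarith)]
      exact eq_congr (by norm_num) (by ring)
  · -- left edge fold at scale i
    obtain ⟨hy0, hy1⟩ := hy
    rw [texp] at hy1
    match i, hi with
    | 1, _ =>
      have e1 : (1:ℝ)/2 ≤ y := by rw [t1] at hy0; exact hy0
      have e2 : y ≤ 1 := by rw [t1] at hy1; linarith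
      rcases le_or_gt y (1/2) with h1 | h1
      · have hye : y = 1/2 := le_antisymm h1 e1
        subst hye
        rw [Gc1 _ h1, Gc2 _ (by rw [t1]; norm_num)]
        refine hs_congr (a' := 0) (b' := 1) (c' := 1) (d' := 0)
          (by norm_num) (by norm_num) (by norm_num) (by rw [t1]; norm_num) ?_
        exact hs5 mem_E01 mem_E10
      · rcases le_or_gt (3*(2:ℝ)^(-((1:ℕ):ℤ)) - y) (1/2) with h2 | h2
        · have hye : y = 1 := by rw [t1] at h2; linarith
          subst hye
          rw [Gc2 _ (not_le.mpr h1), Gc1 _ h2]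
          refine hs_congr (a' := 1) (b' := 0) (c' := 0) (d' := 1)
            (by norm_num) (by norm_num) (by norm_num) (by rw [t1]; norm_num) ?_
          exact hs5 mem_E10 mem_E01
        · rw [Gc2 _ (not_le.mpr h1), Gc2 _ (not_le.mpr h2)]
          refine hs_congr (a' := 1) (b' := 2-2*y) (c' := 1) (d' := 1-(2-2*y))
            (by norm_num) rfl (by norm_num) (by rw [t1]; ring) ?_
          exact hs2 ⟨by linarith, by linarith⟩
    | (j+2), _ =>
      have hsm : (2:ℝ)^(-((j+2:ℕ):ℤ)) ≤ 1/4 := by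
        rw [tsucc, tsucc]; have := tle1 j; linarith
      have hq : 3*(2:ℝ)^(-((j+2:ℕ):ℤ)) - y ≤ 1/2 := by linarith
      have ed : (2:ℝ)^(-((j+1:ℕ):ℤ)) = 2 * (2:ℝ)^(-((j+2:ℕ):ℤ)) := by
        rw [tsucc (j+1)]; ring
      have ed2 : (2:ℝ)^(-((j+1:ℕ):ℤ)+1) = 4 * (2:ℝ)^(-((j+2:ℕ):ℤ)) := by
        rw [texp, ed]; ring
      rw [Gc1 _ (by linarith), Gc1 _ hq]
      refine hs_congr (a' := 0) (b' := 2*y) (c' := 0)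
        (d' := 3*(2:ℝ)^(-((j+1:ℕ):ℤ)) - 2*y) (by norm_num) rfl (by norm_num)
        (by rw [ed]; ring) ?_
      exact hs3 (by omega) ⟨by rw [ed]; linarith, by rw [ed2]; linarith⟩
  · -- bottom edge fold at scale i -> scale i+1
    obtain ⟨hx0, hx1⟩ := hx
    rw [texp] at hx1
    rw [Gc1 _ (by norm_num), Gc1 _ (by norm_num)]
    refine hs_congr (a' := x/2) (b' := 0) (c' := 3*(2:ℝ)^(-((i+1:ℕ):ℤ)) - x/2)
      (d' := 0) rfl (by norm_num) (by rw [tsucc]; ring) (by norm_num) ?_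
    exact hs4 (by omega) ⟨by rw [tsucc]; linarith, by rw [tcs]; linarith⟩
  · exact hs5 (GE hp) (GE hq)

end HSaux
end
noncomputable section
namespace HSaux

lemma lift_F {p q : ℝ × ℝ} (h : hsRel p q) : hsRel (F p) (F q) := by
  induction h with
  | rel _ _ h => exact FbaseRel h
  | refl _ => exact Relation.EqvGen.refl _
  | symm _ _ _ ih => exact Relation.EqvGen.symm _ _ ih
  | trans _ _ _ _ _ ih1 ih2 => exact Relation.EqvGen.trans _ _ _ ih1 ih2

lemma lift_G {p q : ℝ × ℝ} (h : hsRel p q) : hsRel (G p) (G q) := by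
  induction h with
  | rel _ _ h => exact GbaseRel h
  | refl _ => exact Relation.EqvGen.refl _
  | symm _ _ _ ih => exact Relation.EqvGen.symm _ _ ih
  | trans _ _ _ _ _ ih1 ih2 => exact Relation.EqvGen.trans _ _ _ ih1 ih2

lemma mem_Sq {x y : ℝ} : (x, y) ∈ Sq ↔ (0 ≤ x ∧ x ≤ 1) ∧ 0 ≤ y ∧ y ≤ 1 := by
  rw [Sq, Set.mem_prod]; simp only [Set.mem_Icc]

lemma F_mem {p : ℝ × ℝ} (hp : p ∈ Sq) : F p ∈ Sq := by
  obtain ⟨x, y⟩ := p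
  rw [mem_Sq] at hp
  obtain ⟨⟨hx0, hx1⟩, hy0, hy1⟩ := hp
  rcases le_or_gt x (1/2) with h | h
  · rw [Fc1 _ h, mem_Sq]; constructor <;> constructor <;> linarith
  · rw [Fc2 _ (not_le.mpr h), mem_Sq]; constructor <;> constructor <;> linarith

lemma G_mem {p : ℝ × ℝ} (hp : p ∈ Sq) : G p ∈ Sq := by
  obtain ⟨x, y⟩ := p
  rw [mem_Sq] at hp
  obtain ⟨⟨hx0, hx1⟩, hy0, hy1⟩ := hp
  rcases le_or_gt y (1/2) with h | h
  · rw [Gc1 _ h, mem_Sq]; constructor <;> constructor <;> linarith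
  · rw [Gc2 _ (not_le.mpr h), mem_Sq]; constructor <;> constructor <;> linarith

/-- `G (F p) ∼ p` on the square. -/
lemma GF {p : ℝ × ℝ} (hp : p ∈ Sq) : hsRel (G (F p)) p := by
  obtain ⟨x, y⟩ := p
  rw [mem_Sq] at hp
  obtain ⟨⟨hx0, hx1⟩, hy0, hy1⟩ := hp
  rcases le_or_gt x (1/2) with h | h
  · rw [Fc1 _ h, Gc1 _ (by linarith : y/2 ≤ 1/2)]
    exact eq_congr (by ring) (by ring)
  · rcases lt_or_ge y 1 with h2 | h2
    · rw [Fc2 _ (not_le.mpr h), Gc2 _ (by intro hc; linarith : ¬ 1 - y/2 ≤ 1/2)]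
      exact eq_congr (by ring) (by ring)
    · have hy : y = 1 := le_antisymm hy1 h2
      subst hy
      rw [Fc2 _ (not_le.mpr h), Gc1 _ (by norm_num : (1:ℝ) - 1/2 ≤ 1/2)]
      refine hs_congr (a' := 1 - x) (b' := 1) (c' := x) (d' := 1)
        (by ring) (by ring) rfl rfl ?_
      have := hs1 (x := 1 - x) ⟨by linarith, by linarith⟩
      rw [show (1:ℝ) - (1 - x) = x by ring] at this
      exact this

/-- `p ∼ F (G p)` on the square. -/
lemma FG {p : ℝ × ℝ} (hp : p ∈ Sq) : hsRel p (F (G p)) := by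
  obtain ⟨x, y⟩ := p
  rw [mem_Sq] at hp
  obtain ⟨⟨hx0, hx1⟩, hy0, hy1⟩ := hp
  rcases le_or_gt y (1/2) with h | h
  · rw [Gc1 _ h, Fc1 _ (by linarith : x/2 ≤ 1/2)]
    exact eq_congr (by ring) (by ring)
  · rcases lt_or_ge x 1 with h2 | h2
    · rw [Gc2 _ (not_le.mpr h), Fc2 _ (by intro hc; linarith : ¬ 1 - x/2 ≤ 1/2)]
      exact eq_congr (by ring) (by ring)
    · have hx : x = 1 := le_antisymm hx1 h2
      subst hx
      rw [Gc2 _ (not_le.mpr h), Fc1 _ (by norm_num : (1:ℝ) - 1/2 ≤ 1/2)]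
      refine hs_congr (a' := 1) (b' := y) (c' := 1) (d' := 1 - y)
        rfl rfl (by norm_num) (by ring) ?_
      exact hs2 ⟨hy0, hy1⟩

end HSaux
end


/-- The induced map `φ₀ : S → S` (given by `φ₀([p]) = [F(p)]`, i.e. `φ₀ ∘ π = π ∘ F`)
is a bijection of `S`. Equivalently: for all `p, p′ ∈ Σ`, `F(p) ∼ F(p′)` if and only
if `p ∼ p′`, and every point of `Σ` is `∼`-equivalent to a point of `F(Σ)`. -/
theorem phi0_bijective (φ : HS → HS)
    (hφ : ∀ (p : ℝ × ℝ) (hp : p ∈ Sq) (hFp : F p ∈ Sq),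
      φ (hsPi ⟨p, hp⟩) = hsPi ⟨F p, hFp⟩) :
    Function.Bijective φ ∧
    (∀ p ∈ Sq, ∀ p' ∈ Sq, (hsRel (F p) (F p') ↔ hsRel p p')) ∧
    (∀ p ∈ Sq, ∃ p' ∈ Sq, hsRel p (F p')) := by
  have part2 : ∀ p ∈ Sq, ∀ p' ∈ Sq, (hsRel (F p) (F p') ↔ hsRel p p') := by
    intro p hp p' hp'
    constructor
    · intro h
      exact Relation.EqvGen.trans _ _ _
        (Relation.EqvGen.symm _ _ (HSaux.GF hp))
        (Relation.EqvGen.trans _ _ _ (HSaux.lift_G h) (HSaux.GF hp'))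
    · exact HSaux.lift_F
  have part3 : ∀ p ∈ Sq, ∃ p' ∈ Sq, hsRel p (F p') :=
    fun p hp => ⟨HSaux.G p, HSaux.G_mem hp, HSaux.FG hp⟩
  refine ⟨⟨?_, ?_⟩, part2, part3⟩
  · -- injective
    intro a b hab
    obtain ⟨p, rfl⟩ := Quotient.exists_rep a
    obtain ⟨q, rfl⟩ := Quotient.exists_rep b
    have e1 : φ (Quotient.mk hsSetoid p) = hsPi ⟨F p.1, HSaux.F_mem p.2⟩ :=
      hφ p.1 p.2 (HSaux.F_mem p.2)
    have e2 : φ (Quotient.mk hsSetoid q) = hsPi ⟨F q.1, HSaux.F_mem q.2⟩ :=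
      hφ q.1 q.2 (HSaux.F_mem q.2)
    have e : hsPi ⟨F p.1, HSaux.F_mem p.2⟩ = hsPi ⟨F q.1, HSaux.F_mem q.2⟩ :=
      e1.symm.trans (hab.trans e2)
    have hr : hsRel (F p.1) (F q.1) := Quotient.exact e
    exact Quotient.sound ((part2 p.1 p.2 q.1 q.2).mp hr)
  · -- surjective
    intro s
    obtain ⟨p, rfl⟩ := Quotient.exists_rep s
    obtain ⟨p', hp', hrel⟩ := part3 p.1 p.2
    refine ⟨hsPi ⟨p', hp'⟩, ?_⟩
    rw [hφ p' hp' (HSaux.F_mem hp')]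
    exact Quotient.sound (Relation.EqvGen.symm _ _ hrel)
end

section
/- The induced map φ₀ : S → S is continuous with respect to the quotient topology on S (the identifications are precisely those needed to make F continuous: although F itself is discontinuous on Σ along the segment x = 1/2, the composition π ∘ F : Σ → S is continuous). -/
noncomputable section PhiAux

/-- Clamp to the unit square. -/
def clampP : ℝ × ℝ → ℝ × ℝ := fun q => (min 1 (max 0 q.1), min 1 (max 0 q.2))

lemma clampP_mem (q : ℝ × ℝ) : clampP q ∈ Sq := by
  constructor <;>
    exact ⟨le_min zero_le_one (le_max_left _ _), min_le_left _ _⟩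

lemma clampP_cont : Continuous clampP := by
  unfold clampP; fun_prop

lemma clampP_eq_self {q : ℝ × ℝ} (hq : q ∈ Sq) : clampP q = q := by
  obtain ⟨⟨h1, h2⟩, h3, h4⟩ := hq
  simp only [clampP, max_eq_right h1, min_eq_right h2, max_eq_right h3, min_eq_right h4]

lemma hF_mem {p : ℝ × ℝ} (hp : p ∈ Sq) : F p ∈ Sq := by
  obtain ⟨⟨h1, h2⟩, h3, h4⟩ := hp
  by_cases hx : p.1 ≤ 1 / 2
  · unfold F; rw [if_pos hx]
    exact ⟨⟨by linarith, by linarith⟩, by linarith, by linarith⟩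
  · unfold F; rw [if_neg hx]
    have := not_le.mp hx
    exact ⟨⟨by linarith, by linarith⟩, by linarith, by linarith⟩

/-- Continuous version of the left branch composed with π. -/
def cL : ↥Sq → HS := fun p => hsPi ⟨clampP (2 * p.val.1, p.val.2 / 2), clampP_mem _⟩

/-- Continuous version of the right branch composed with π. -/
def cR : ↥Sq → HS := fun p => hsPi ⟨clampP (2 - 2 * p.val.1, 1 - p.val.2 / 2), clampP_mem _⟩

lemma cL_cont : Continuous cL := by
  apply Continuous.comp continuous_quot_mk
  exact Continuous.subtype_mk (clampP_cont.comp (by fun_prop)) _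

lemma cR_cont : Continuous cR := by
  apply Continuous.comp continuous_quot_mk
  exact Continuous.subtype_mk (clampP_cont.comp (by fun_prop)) _

lemma seam_agree (p : ↥Sq) (h : p.val.1 = 1 / 2) : cL p = cR p := by
  have hy : p.val.2 ∈ Set.Icc (0:ℝ) 1 := p.property.2
  apply Quotient.sound
  show hsRel (clampP (2 * p.val.1, p.val.2 / 2)) (clampP (2 - 2 * p.val.1, 1 - p.val.2 / 2))
  have hA : (2 * p.val.1, p.val.2 / 2) = ((1:ℝ), p.val.2 / 2) := by rw [h]; norm_num
  have hB : (2 - 2 * p.val.1, 1 - p.val.2 / 2) = ((1:ℝ), 1 - p.val.2 / 2) := by rw [h]; norm_num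
  have memA : ((1:ℝ), p.val.2 / 2) ∈ Sq :=
    ⟨⟨zero_le_one, le_refl 1⟩, by constructor <;> [linarith [hy.1]; linarith [hy.2]]⟩
  have memB : ((1:ℝ), 1 - p.val.2 / 2) ∈ Sq :=
    ⟨⟨zero_le_one, le_refl 1⟩, by constructor <;> [linarith [hy.2]; linarith [hy.1]]⟩
  rw [hA, hB, clampP_eq_self memA, clampP_eq_self memB]
  exact Relation.EqvGen.rel _ _
    (Or.inr (Or.inl ⟨p.val.2 / 2, ⟨by linarith [hy.1], by linarith [hy.2]⟩, rfl, rfl⟩))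

end PhiAux

/-- The induced map `φ₀ : S → S` (given by `φ₀ ∘ π = π ∘ F`) is continuous with
respect to the quotient topology on `S`; equivalently, the composition
`π ∘ F : Σ → S` is continuous (even though `F` itself is discontinuous on `Σ`). -/
theorem phi0_continuous (φ : HS → HS)
    (hφ : ∀ (p : ℝ × ℝ) (hp : p ∈ Sq) (hFp : F p ∈ Sq),
      φ (hsPi ⟨p, hp⟩) = hsPi ⟨F p, hFp⟩) :
    Continuous φ ∧ Continuous (fun p : ↥Sq => φ (hsPi p)) := by
  have hcomp : Continuous (fun p : ↥Sq => φ (hsPi p)) := by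
    have key : (fun p : ↥Sq => φ (hsPi p)) =
        fun p : ↥Sq => if p.val.1 ≤ 1 / 2 then cL p else cR p := by
      funext p
      rw [hφ p.val p.property (hF_mem p.property)]
      by_cases hx : p.val.1 ≤ 1 / 2
      · simp only [if_pos hx]
        have hFA : F p.val = (2 * p.val.1, p.val.2 / 2) := by unfold F; rw [if_pos hx]
        apply congrArg hsPi
        apply Subtype.ext
        show F p.val = clampP (2 * p.val.1, p.val.2 / 2)
        rw [clampP_eq_self (hFA ▸ hF_mem p.property), hFA]
      · simp only [if_neg hx]
        have hFA : F p.val = (2 - 2 * p.val.1, 1 - p.val.2 / 2) := by unfold F; rw [if_neg hx]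
        apply congrArg hsPi
        apply Subtype.ext
        show F p.val = clampP (2 - 2 * p.val.1, 1 - p.val.2 / 2)
        rw [clampP_eq_self (hFA ▸ hF_mem p.property), hFA]
    rw [key]
    exact Continuous.if_le cL_cont cR_cont (by fun_prop) continuous_const
      (fun p hp => seam_agree p hp)
  refine ⟨?_, hcomp⟩
  exact isQuotientMap_quotient_mk'.continuous_iff.mpr hcomp
end
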